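/- Let A be an n×n complex matrix, define the n×n matrix A^∨ by A^∨_{ij} = (−1)^{n−j} A_{n+1−i, j}, and let B be the 2n×n matrix whose top n×n block is the identity I_n and whose bottom n×n block is A^∨. Then every n×n minor of B (the determinant of the n×n submatrix of B with rows indexed by any n-element subset of [2n], in increasing order) is a nonnegative real number if and only if A is totally nonnegative. (That is, the column span of B is a point of Gr_{≥0}(n,2n) if and only if A is totally nonnegative.) -/

import Mathlib

noncomputable section

/-- A complex number is a nonnegative real. -/
def IsNonnegReal (z : ℂ) : Prop := 0 ≤ z.re ∧ z.im = 0

/-- The minor `det A[J, I]` of the square matrix `A` with row set `J` and column set `I`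
(rows and columns taken in increasing order); `0` if `J` and `I` have different sizes. -/
def minorJI {n : ℕ} (A : Matrix (Fin n) (Fin n) ℂ) (J I : Finset (Fin n)) : ℂ :=
  if h : J.card = I.card then
    Matrix.det (Matrix.of fun a b : Fin I.card =>
      A ((J.orderIsoOfFin h) a) ((I.orderIsoOfFin rfl) b))
  else 0

/-- `A` is totally nonnegative if all of its minors are nonnegative reals. -/
def TotallyNonneg {n : ℕ} (A : Matrix (Fin n) (Fin n) ℂ) : Prop :=
  ∀ J I : Finset (Fin n), J.card = I.card → IsNonnegReal (minorJI A J I)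

/-- The maximal minor `det (M[I])` of an `N × k` matrix `M` with row set `I`
(rows taken in increasing order); `0` if `I` does not have exactly `k` elements. -/
def minorRow {N k : ℕ} (M : Matrix (Fin N) (Fin k) ℂ) (I : Finset (Fin N)) : ℂ :=
  if h : I.card = k then
    Matrix.det (Matrix.of fun a b : Fin k => M ((I.orderIsoOfFin h) a) b)
  else 0

/-- The matrix `A^∨` with `A^∨_{ij} = (-1)^{n-j} A_{n+1-i, j}` (in 1-based indexing);
in 0-based indexing, `A^∨ i j = (-1)^{n-1-j} A_{rev i, j}`. -/
def Avee {n : ℕ} (A : Matrix (Fin n) (Fin n) ℂ) : Matrix (Fin n) (Fin n) ℂ :=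
  fun i j => (-1 : ℂ) ^ (n - 1 - (j : ℕ)) * A i.rev j

/-- The `2n × n` matrix whose top `n × n` block is the identity and whose bottom `n × n`
block is `A^∨`. -/
def Bmat {n : ℕ} (A : Matrix (Fin n) (Fin n) ℂ) : Matrix (Fin (2 * n)) (Fin n) ℂ :=
  fun i j =>
    if h : (i : ℕ) < n then (if (i : ℕ) = (j : ℕ) then 1 else 0)
    else Avee A ⟨(i : ℕ) - n, by have := i.isLt; omega⟩ j

/-!
Split a row set `I` of `B = (I_n ; A^∨)` into the identity rows it contains, indexed by `Kᶜ`,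
and the rows of `A^∨` it contains, indexed by `J` (row `n + rev j` of `B` is row `j` of `A`, up to
column signs); `#I = n` forces `#J = #K`, and every pair `(J, K)` arises. Reordering rows and
columns of `B[I]` into blocks makes it block triangular with an identity block, so
`det B[I] = sign σ · ∏_{c ∈ K} (-1)^(n-1-c) · det A[J, K]`. The inversions of the reordering
permutation `σ` are exactly the pairs `i < j` with `i ∈ K`, so `sign σ = ∏_{i ∈ K} (-1)^(n-1-i)`
and the two signs cancel.
-/

open Finset Equiv

theorem Matrix.det_submatrix_equiv_equiv {ι α R : Type*} [Fintype ι] [DecidableEq ι]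
    [Fintype α] [DecidableEq α] [CommRing R] (M : Matrix ι ι R) (e₁ e₂ : α ≃ ι) :
    (M.submatrix e₁ e₂).det = Perm.sign (e₁.symm.trans e₂) * M.det := by
  have : M.submatrix e₁ e₂ = (M.submatrix id (e₁.symm.trans e₂)).submatrix e₁ e₁ := by
    ext; simp
  rw [this, Matrix.det_submatrix_equiv_self, Matrix.det_permute']

theorem Finset.orderEmbOfFin_equiv_apply {α β : Type*} [LinearOrder α] {s : Finset α} {k : ℕ}
    (h : #s = k) (e : β ≃ Fin k) {f : β → α} (hmem : ∀ u, f u ∈ s)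
    (hmono : ∀ u v, e u < e v → f u < f v) (u : β) :
    s.orderEmbOfFin h (e u) = f u := by
  have hf : f ∘ e.symm = s.orderEmbOfFin h :=
    orderEmbOfFin_unique h (fun _ => hmem _) fun x y hxy => hmono _ _ (by simpa using hxy)
  simp [← hf]

theorem Fin.card_compl_add_card {n : ℕ} (s : Finset (Fin n)) : #sᶜ + #s = n := by
  simp [_root_.Finset.card_compl_add_card s]

namespace GrassmannianTNN

variable {n : ℕ}

section Rows

def topRow (n : ℕ) : Fin n ↪ Fin (2 * n) :=
  Fin.castLEEmb (by omega)

def bottomRow (n : ℕ) : Fin n ↪ Fin (2 * n) where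
  toFun j := ⟨n + j.rev, by omega⟩
  inj' i j h := by
    simp only [Fin.ext_iff, Fin.val_rev] at h ⊢
    omega

@[simp] theorem val_topRow (k : Fin n) : (topRow n k : ℕ) = k := rfl

@[simp] theorem val_bottomRow (j : Fin n) : (bottomRow n j : ℕ) = n + j.rev := rfl

theorem Bmat_topRow (A : Matrix (Fin n) (Fin n) ℂ) (k c : Fin n) :
    Bmat A (topRow n k) c = (1 : Matrix (Fin n) (Fin n) ℂ) k c := by
  unfold Bmat
  rw [dif_pos (show (topRow n k : ℕ) < n from k.isLt)]
  by_cases hkc : k = c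
  · subst hkc; simp
  · simp [Matrix.one_apply_ne hkc, Fin.val_ne_of_ne hkc]

theorem Bmat_bottomRow (A : Matrix (Fin n) (Fin n) ℂ) (j c : Fin n) :
    Bmat A (bottomRow n j) c = (-1) ^ (n - 1 - (c : ℕ)) * A j c := by
  have hrow : (⟨n + j.rev - n, by omega⟩ : Fin n) = j.rev := by ext; simp
  simp only [Bmat, val_bottomRow, Nat.not_lt.2 (Nat.le_add_right n _), dif_neg,
    not_false_eq_true, hrow, Avee, Fin.rev_rev]

theorem topRow_lt_bottomRow (k j : Fin n) : topRow n k < bottomRow n j := by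
  rw [Fin.lt_def, val_topRow, val_bottomRow]; omega

theorem bottomRow_strictAnti : StrictAnti (bottomRow n) := fun i j hij => by
  rw [Fin.lt_def, val_bottomRow, val_bottomRow]
  have := Fin.rev_lt_rev.2 hij
  omega

theorem exists_topRow_or_bottomRow (x : Fin (2 * n)) :
    (∃ k, topRow n k = x) ∨ ∃ j, bottomRow n j = x := by
  by_cases hx : (x : ℕ) < n
  · exact Or.inl ⟨⟨x, hx⟩, rfl⟩
  · refine Or.inr ⟨Fin.rev ⟨x - n, by omega⟩, Fin.ext ?_⟩
    simp only [val_bottomRow, Fin.rev_rev]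
    omega

def rowSet (J K : Finset (Fin n)) : Finset (Fin (2 * n)) :=
  Kᶜ.map (topRow n) ∪ J.map (bottomRow n)

theorem card_rowSet (J K : Finset (Fin n)) : #(rowSet J K) = #Kᶜ + #J := by
  rw [rowSet, card_union_of_disjoint, card_map, card_map]
  simp only [disjoint_left, mem_map, not_exists, not_and]
  rintro _ ⟨k, -, rfl⟩ j - h
  exact (topRow_lt_bottomRow k j).ne' h

theorem card_rowSet_of_card_eq {J K : Finset (Fin n)} (h : #J = #K) : #(rowSet J K) = n := by
  rw [card_rowSet, h, Fin.card_compl_add_card]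

theorem exists_rowSet_eq {I : Finset (Fin (2 * n))} (hI : #I = n) :
    ∃ J K : Finset (Fin n), #J = #K ∧ rowSet J K = I := by
  set J := univ.filter (bottomRow n · ∈ I)
  set K := (univ.filter (topRow n · ∈ I))ᶜ
  have hJK : rowSet J K = I := by
    ext x
    rcases exists_topRow_or_bottomRow x with ⟨k, rfl⟩ | ⟨j, rfl⟩ <;>
      simp [rowSet, J, K, (topRow_lt_bottomRow _ _).ne, (topRow_lt_bottomRow _ _).ne']
  refine ⟨J, K, ?_, hJK⟩
  have := card_rowSet J K
  rw [hJK, hI] at this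
  have := Fin.card_compl_add_card K
  omega

end Rows

section Reordering

variable (K : Finset (Fin n))

/-- Row positions in `rowSet J K`: the rows of `A^∨` come last, in decreasing order of `J`. -/
def rowEquiv : Fin #K ⊕ Fin #Kᶜ ≃ Fin n :=
  (sumCongr Fin.revPerm (Equiv.refl _)).trans
    ((sumComm _ _).trans (finSumFinEquiv.trans (finCongr (Fin.card_compl_add_card K))))

theorem val_rowEquiv_inl (b : Fin #K) : (rowEquiv K (.inl b) : ℕ) = n - 1 - b := by
  have := Fin.card_compl_add_card K
  simp [rowEquiv]
  omega

theorem val_rowEquiv_inr (a : Fin #Kᶜ) : (rowEquiv K (.inr a) : ℕ) = a := by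
  simp [rowEquiv]

def colEquiv : Fin #K ⊕ Fin #Kᶜ ≃ Fin n :=
  finSumEquivOfFinset rfl rfl

def blockPerm : Perm (Fin n) :=
  (colEquiv K).symm.trans (rowEquiv K)

theorem blockPerm_colEquiv (u : Fin #K ⊕ Fin #Kᶜ) :
    blockPerm K (colEquiv K u) = rowEquiv K u := by
  simp [blockPerm]

theorem blockPerm_lt_blockPerm_iff {i j : Fin n} (hij : i < j) :
    blockPerm K i < blockPerm K j ↔ i ∉ K := by
  obtain ⟨u, rfl⟩ := (colEquiv K).surjective i
  obtain ⟨v, rfl⟩ := (colEquiv K).surjective j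
  have hcard := Fin.card_compl_add_card K
  rw [blockPerm_colEquiv, blockPerm_colEquiv, Fin.lt_def]
  rcases u with b | a <;> rcases v with b' | a' <;>
    simp only [colEquiv, finSumEquivOfFinset_inl, finSumEquivOfFinset_inr,
      OrderEmbedding.lt_iff_lt, orderEmbOfFin_mem, ← mem_compl, val_rowEquiv_inl,
      val_rowEquiv_inr, Fin.lt_def, not_true_eq_false, iff_false, iff_true, not_lt] at hij ⊢
  · omega
  · have := b.isLt; have := a'.isLt; omega
  · have := a.isLt; have := b'.isLt; omega
  · exact hij

theorem sign_blockPerm :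
    Perm.sign (blockPerm K) = ∏ i ∈ K, (-1 : ℤˣ) ^ (n - 1 - (i : ℕ)) := by
  rw [Perm.sign_eq_prod_prod_Ioi]
  calc ∏ i, ∏ j ∈ Ioi i, (if blockPerm K i < blockPerm K j then 1 else -1)
      = ∏ i, ∏ j ∈ Ioi i, (if i ∈ K then -1 else 1 : ℤˣ) := by
        refine prod_congr rfl fun i _ => prod_congr rfl fun j hj => ?_
        rw [if_congr (blockPerm_lt_blockPerm_iff K (mem_Ioi.1 hj)) rfl rfl]
        exact ite_not _ _ _
    _ = ∏ i ∈ K, (-1) ^ (n - 1 - (i : ℕ)) := by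
        simp [prod_ite_mem, Fin.card_Ioi]

end Reordering

section Minors

variable {J K : Finset (Fin n)}

theorem orderEmbOfFin_rowSet_rowEquiv (h : #J = #K) (u : Fin #K ⊕ Fin #Kᶜ) :
    (rowSet J K).orderEmbOfFin (card_rowSet_of_card_eq h) (rowEquiv K u) =
      u.elim (fun b => bottomRow n (J.orderEmbOfFin h b))
        (fun a => topRow n (Kᶜ.orderEmbOfFin rfl a)) := by
  refine orderEmbOfFin_equiv_apply _ (rowEquiv K) (fun u => ?_) (fun u v huv => ?_) u
  · rcases u with b | a
    · exact mem_union_right _ (mem_map_of_mem _ (orderEmbOfFin_mem _ _ _))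
    · exact mem_union_left _ (mem_map_of_mem _ (orderEmbOfFin_mem _ _ _))
  · rw [Fin.lt_def] at huv
    rcases u with b | a <;> rcases v with b' | a' <;>
      simp only [val_rowEquiv_inl, val_rowEquiv_inr, Sum.elim_inl, Sum.elim_inr] at huv ⊢
    · refine bottomRow_strictAnti ((J.orderEmbOfFin h).strictMono ?_)
      rw [Fin.lt_def]; omega
    · have := b.isLt; have := a'.isLt; have := Fin.card_compl_add_card K; omega
    · exact topRow_lt_bottomRow _ _
    · rw [Fin.lt_def, val_topRow, val_topRow, ← Fin.lt_def]
      exact (Kᶜ.orderEmbOfFin rfl).strictMono (Fin.lt_def.2 huv)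

theorem det_Bmat_submatrix_rowSet (A : Matrix (Fin n) (Fin n) ℂ) (h : #J = #K) :
    ((Bmat A).submatrix ((rowSet J K).orderEmbOfFin (card_rowSet_of_card_eq h) ∘ rowEquiv K)
        (colEquiv K)).det = (∏ i ∈ K, (-1 : ℂ) ^ (n - 1 - (i : ℕ))) * minorJI A J K := by
  set M := (Bmat A).submatrix ((rowSet J K).orderEmbOfFin (card_rowSet_of_card_eq h) ∘
    rowEquiv K) (colEquiv K)
  have hM : ∀ u v, M u v = Bmat A (u.elim (fun b => bottomRow n (J.orderEmbOfFin h b))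
      (fun a => topRow n (Kᶜ.orderEmbOfFin rfl a))) (colEquiv K v) := fun u v => by
    simp only [M, Matrix.submatrix_apply, Function.comp_apply]
    rw [orderEmbOfFin_rowSet_rowEquiv]
  set A' := Matrix.of fun b b' => A (J.orderEmbOfFin h b) (K.orderEmbOfFin rfl b')
  have h11 : M.toBlocks₁₁ = Matrix.of fun b b' =>
      (fun c => (-1) ^ (n - 1 - (K.orderEmbOfFin rfl c : ℕ))) b' * A' b b' := by
    ext b b'
    simp [Matrix.toBlocks₁₁, hM, Bmat_bottomRow, colEquiv, A']
  have h21 : M.toBlocks₂₁ = 0 := by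
    ext a b
    have hne : Kᶜ.orderEmbOfFin rfl a ≠ K.orderEmbOfFin rfl b := fun he =>
      mem_compl.1 (he ▸ orderEmbOfFin_mem Kᶜ rfl a) (orderEmbOfFin_mem K rfl b)
    simp [Matrix.toBlocks₂₁, hM, Bmat_topRow, colEquiv, Matrix.one_apply_ne hne]
  have h22 : M.toBlocks₂₂ = 1 := by
    ext a a'
    simp [Matrix.toBlocks₂₂, hM, Bmat_topRow, colEquiv, Matrix.one_apply]
  rw [← M.fromBlocks_toBlocks, h11, h21, h22, Matrix.det_fromBlocks_zero₂₁, Matrix.det_one,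
    mul_one, Matrix.det_mul_row, minorJI, dif_pos h]
  congr 1
  rw [← prod_coe_sort K, ← (K.orderIsoOfFin rfl).toEquiv.prod_comp]
  rfl

theorem minorRow_Bmat_rowSet (A : Matrix (Fin n) (Fin n) ℂ) (h : #J = #K) :
    minorRow (Bmat A) (rowSet J K) = minorJI A J K := by
  have hI := card_rowSet_of_card_eq h
  have hminor : minorRow (Bmat A) (rowSet J K) =
      ((Bmat A).submatrix ((rowSet J K).orderEmbOfFin hI) id).det := by
    rw [minorRow, dif_pos hI]; rfl
  have hsign : (Perm.sign ((rowEquiv K).symm.trans (colEquiv K)) : ℂ) =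
      ∏ i ∈ K, (-1 : ℂ) ^ (n - 1 - (i : ℕ)) := by
    rw [← Perm.sign_symm]
    change (Perm.sign (blockPerm K) : ℂ) = _
    simp [sign_blockPerm]
  have hdet := Matrix.det_submatrix_equiv_equiv
    ((Bmat A).submatrix ((rowSet J K).orderEmbOfFin hI) id) (rowEquiv K) (colEquiv K)
  rw [Matrix.submatrix_submatrix, Function.id_comp, det_Bmat_submatrix_rowSet A h, hsign,
    ← hminor] at hdet
  refine (mul_left_cancel₀ ?_ hdet).symm
  exact prod_ne_zero_iff.2 fun _ _ => pow_ne_zero _ (neg_ne_zero.2 one_ne_zero)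

end Minors

end GrassmannianTNN

/-- The column span of `(I_n ; A^∨)` lies in the totally nonnegative Grassmannian
`Gr_{≥0}(n, 2n)` iff `A` is totally nonnegative. -/
theorem grassmannian_point_tnn_iff_matrix_tnn {n : ℕ} (A : Matrix (Fin n) (Fin n) ℂ) :
    (∀ I : Finset (Fin (2 * n)), I.card = n → IsNonnegReal (minorRow (Bmat A) I)) ↔
      TotallyNonneg A := by
  constructor
  · intro hB J K h
    rw [← GrassmannianTNN.minorRow_Bmat_rowSet A h]
    exact hB _ (GrassmannianTNN.card_rowSet_of_card_eq h)
  · intro hA I hI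
    obtain ⟨J, K, h, rfl⟩ := GrassmannianTNN.exists_rowSet_eq hI
    rw [GrassmannianTNN.minorRow_Bmat_rowSet A h]
    exact hA J K h
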